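/- arXiv:2310.07862 — 4 statements merged into one kernel-verified Lean document; each statement's English description precedes it below -/
import Mathlib

section
/- Let G be a weighted graph, let P be a shortest path in G connecting vertices u and v, and let Q be another u-v path (possibly non-simple) in G. Then either every edge of P belongs to Q, or the sum of the lengths of P and Q is at least the girth of G (the minimum length of a cycle in G). -/
/-! If an edge `e = xy` of the path `P` is missing from `Q`, cut `P` at `e`: the rest of `P`
together with `Q` is a walk from `y` back to `x` that avoids `e`, because `P` repeats no edge.
Shortening that walk to a path and closing it up with `e` gives a cycle of length at most
`|P| + |Q|`. -/

open SimpleGraph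

/-- The weighted length of a walk: sum of the weights of its edges (with multiplicity). -/
def wlength {V : Type*} {G : SimpleGraph V} (w : V → V → ℝ) {u v : V} (p : G.Walk u v) : ℝ :=
  (p.darts.map (fun d => w d.toProd.1 d.toProd.2)).sum

/-- The weighted shortest-path distance between two vertices. -/
noncomputable def wdist {V : Type*} (G : SimpleGraph V) (w : V → V → ℝ) (u v : V) : ℝ :=
  sInf {l | ∃ p : G.Walk u v, l = wlength w p}

/-- The weighted girth: the minimum weighted length of a cycle. -/
noncomputable def wgirth {V : Type*} (G : SimpleGraph V) (w : V → V → ℝ) : ℝ :=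
  sInf {l | ∃ (a : V) (c : G.Walk a a), c.IsCycle ∧ l = wlength w c}

open Walk

section WeightedLength

variable {V : Type*} {G : SimpleGraph V} {w : V → V → ℝ}

lemma wlength_nil {a : V} : wlength w (nil : G.Walk a a) = 0 := rfl

lemma wlength_append {a b c : V} (p : G.Walk a b) (q : G.Walk b c) :
    wlength w (p.append q) = wlength w p + wlength w q := by
  simp [wlength, darts_append]

lemma wlength_cons {a b c : V} (h : G.Adj a b) (p : G.Walk b c) :
    wlength w (cons h p) = w a b + wlength w p := by
  simp [wlength]

lemma wlength_reverse (hsymm : ∀ u v, w u v = w v u) {a b : V} (p : G.Walk a b) :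
    wlength w p.reverse = wlength w p := by
  simp only [wlength, darts_reverse, List.map_reverse, List.sum_reverse, List.map_map]
  congr 1
  exact List.map_congr_left fun d _ => hsymm d.snd d.fst

lemma wlength_le_of_darts_sublist (hw : ∀ u v, G.Adj u v → 0 ≤ w u v) {a b c d : V}
    {p : G.Walk a b} {q : G.Walk c d} (h : p.darts.Sublist q.darts) :
    wlength w p ≤ wlength w q := by
  refine (h.map _).sum_le_sum fun x hx => ?_
  obtain ⟨d, -, rfl⟩ := List.mem_map.1 hx
  exact hw _ _ d.adj

lemma wlength_nonneg (hw : ∀ u v, G.Adj u v → 0 ≤ w u v) {a b : V} (p : G.Walk a b) :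
    0 ≤ wlength w p :=
  wlength_le_of_darts_sublist (p := (nil : G.Walk a a)) hw (List.nil_sublist _)

lemma wgirth_le_wlength_of_isCycle (hw : ∀ u v, G.Adj u v → 0 ≤ w u v) {a : V}
    {c : G.Walk a a} (hc : c.IsCycle) : wgirth G w ≤ wlength w c :=
  csInf_le ⟨0, by rintro _ ⟨_, c', -, rfl⟩; exact wlength_nonneg hw c'⟩ ⟨a, c, hc, rfl⟩

lemma wgirth_le_add_wlength_of_notMem_edges [DecidableEq V]
    (hw : ∀ u v, G.Adj u v → 0 ≤ w u v) {x y : V} (h : G.Adj x y) (W : G.Walk y x)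
    (he : s(x, y) ∉ W.edges) : wgirth G w ≤ w x y + wlength w W := by
  have hcycle : (cons h W.bypass).IsCycle :=
    Path.cons_isCycle ⟨W.bypass, W.bypass_isPath⟩ h
      fun hm => he (W.edges_bypass_subset_edges hm)
  calc wgirth G w ≤ wlength w (cons h W.bypass) := wgirth_le_wlength_of_isCycle hw hcycle
    _ ≤ w x y + wlength w W := by
      rw [wlength_cons]
      exact (add_le_add_iff_left _).2 (wlength_le_of_darts_sublist hw W.darts_bypass_sublist_darts)

theorem SimpleGraph.Walk.IsPath.wgirth_le_wlength_add_wlength (hsymm : ∀ u v, w u v = w v u)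
    (hw : ∀ u v, G.Adj u v → 0 ≤ w u v) {u v : V} {P : G.Walk u v} (hP : P.IsPath)
    (Q : G.Walk u v) {e : Sym2 V} (heP : e ∈ P.edges) (heQ : e ∉ Q.edges) :
    wgirth G w ≤ wlength w P + wlength w Q := by
  classical
  obtain ⟨⟨⟨x, y⟩, hxy⟩, hd, rfl⟩ := List.mem_map.1 heP
  obtain ⟨before, after, rfl⟩ := (isSubwalk_toWalk_adj_iff_mem_darts P).2 hd
  have hfresh : s(x, y) ∉ before.edges ∧ s(x, y) ∉ after.edges := by
    have := hP.edges_nodup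
    simp only [edges_append, Adj.toWalk, edges_cons, edges_nil, List.append_assoc,
      List.singleton_append, List.nodup_middle, List.nodup_cons, List.mem_append] at this
    tauto
  have hrest : s(x, y) ∉ (after.append (Q.reverse.append before)).edges := by
    simp only [edges_append, edges_reverse, List.mem_append, List.mem_reverse] at hfresh heQ ⊢
    tauto
  have hcycle := wgirth_le_add_wlength_of_notMem_edges (w := w) hw hxy _ hrest
  simp only [wlength_append, wlength_reverse hsymm, Adj.toWalk, wlength_cons, wlength_nil]
    at hcycle ⊢
  linarith

end WeightedLength

theorem shortest_path_subset_or_girth_general {V : Type*} (G : SimpleGraph V) (w : V → V → ℝ)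
    (hsymm : ∀ u v, w u v = w v u) (hpos : ∀ u v, G.Adj u v → 0 < w u v)
    {u v : V} (P : G.Walk u v) (hP : P.IsPath)
    (Q : G.Walk u v) :
    (∀ e ∈ P.edges, e ∈ Q.edges) ∨ wgirth G w ≤ wlength w P + wlength w Q := by
  by_contra! ⟨⟨e, heP, heQ⟩, hlt⟩
  exact hlt.not_ge <|
    hP.wgirth_le_wlength_add_wlength hsymm (fun a b h => (hpos a b h).le) Q heP heQ

/-- if `P` is a shortest `u`-`v` path in a positively weighted graph `G` and `Q`
is any other `u`-`v` walk, then either every edge of `P` belongs to `Q`, or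
`|P| + |Q| ≥ girth(G)`. -/
theorem shortest_path_subset_or_girth {V : Type*} (G : SimpleGraph V) (w : V → V → ℝ)
    (hsymm : ∀ u v, w u v = w v u) (hpos : ∀ u v, G.Adj u v → 0 < w u v)
    {u v : V} (P : G.Walk u v) (hP : P.IsPath) (hshort : wlength w P = wdist G w u v)
    (Q : G.Walk u v) :
    (∀ e ∈ P.edges, e ∈ Q.edges) ∨ wgirth G w ≤ wlength w P + wlength w Q :=
  shortest_path_subset_or_girth_general G w hsymm hpos P hP Q
end

section
/- Let G be an unweighted graph and let P and Q be two simple paths in G such that the total number of edges of P plus the number of edges of Q is strictly less than the girth of G. Then the intersection of P and Q (as edge sets) forms a contiguous subpath of P. -/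
/-!
The edges of `P` and `Q` span a subgraph of `G` with fewer edges than the girth, hence a forest.
If two edges of `P` lie on `Q`, the segment of `P` from the first to the second is a path joining
two vertices of `Q`; in a forest it is the only path between them, so it runs inside `Q`.
-/

open SimpleGraph

namespace List

variable {α : Type*} {p : α → Bool}

lemma filter_cons_eq_takeWhile_of_forall_infix {a : α} {l : List α} (ha : p a)
    (h : ∀ b c m, b :: m ++ [c] <:+: a :: l → p b → p c → ∀ d ∈ m, p d) :
    (a :: l).filter p = (a :: l).takeWhile p := by
  induction l generalizing a with
  | nil => simp [ha]
  | cons b l ih =>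
    by_cases hb : p b
    · have htail : (b :: l).filter p = (b :: l).takeWhile p :=
        ih hb fun c d m hinf => h c d m (hinf.trans (suffix_cons a _).isInfix)
      simp [takeWhile_cons, ha, htail]
    · have hrest : ∀ d ∈ l, ¬ p d := by
        intro d hd hpd
        obtain ⟨s, t, rfl⟩ := append_of_mem hd
        exact hb (h a d (b :: s) ⟨[], t, by simp⟩ ha hpd b (by simp))
      simp [ha, hb, filter_eq_nil_iff.mpr hrest]

lemma filter_isInfix_of_forall_infix {l : List α}
    (h : ∀ b c m, b :: m ++ [c] <:+: l → p b → p c → ∀ d ∈ m, p d) :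
    l.filter p <:+: l := by
  induction l with
  | nil => simp
  | cons a l ih =>
    by_cases ha : p a
    · rw [filter_cons_eq_takeWhile_of_forall_infix ha h]
      exact (takeWhile_prefix p).isInfix
    · rw [filter_cons_of_neg ha]
      exact (ih fun b c m hinf => h b c m (hinf.trans (suffix_cons a _).isInfix)).trans
        (suffix_cons a _).isInfix

lemma IsInfix.exists_eq_take_drop {l m : List α} (h : m <:+: l) :
    ∃ i j, m = (l.drop i).take j := by
  obtain ⟨s, t, rfl⟩ := h
  exact ⟨s.length, m.length, by simp⟩

end List

namespace SimpleGraph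

variable {V : Type*} {G : SimpleGraph V}

lemma isAcyclic_fromEdgeSet_of_length_lt_egirth {L : List (Sym2 V)}
    (hL : ∀ e ∈ L, e ∈ G.edgeSet) (hlen : (L.length : ℕ∞) < G.egirth) :
    (fromEdgeSet {e | e ∈ L}).IsAcyclic := by
  intro a c hc
  have hle : fromEdgeSet {e | e ∈ L} ≤ G :=
    (fromEdgeSet_le G).mpr fun e he => hL e he.1
  have hcL : c.length ≤ L.length := by
    rw [← c.length_edges]
    refine (List.subperm_of_subset hc.edges_nodup fun e he => ?_).length_le
    have hcH := c.edges_subset_edgeSet he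
    rw [edgeSet_fromEdgeSet] at hcH
    exact hcH.1
  have hgirth : G.egirth ≤ c.length := (egirth_anti hle).trans (egirth_le_length hc)
  exact (hlen.trans_le hgirth).not_ge (by exact_mod_cast hcL)

lemma IsAcyclic.edges_subset_of_mem_support [DecidableEq V] (hG : G.IsAcyclic)
    {a b x y : V} {W : G.Walk a b} (hW : W.IsPath) (Q : G.Walk x y)
    (ha : a ∈ Q.support) (hb : b ∈ Q.support) : W.edges ⊆ Q.edges := by
  let R : G.Walk a b := (Q.takeUntil a ha).reverse.append (Q.takeUntil b hb)
  have hRQ : R.edges ⊆ Q.edges := by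
    intro e he
    simp only [R, Walk.edges_append, Walk.edges_reverse, List.mem_append, List.mem_reverse] at he
    rcases he with he | he
    · exact Q.edges_takeUntil_subset_edges ha he
    · exact Q.edges_takeUntil_subset_edges hb he
  have hWR : W = R.bypass :=
    congrArg Subtype.val ((hG.subsingleton_path a b).elim ⟨W, hW⟩ R.toPath)
  exact hWR ▸ fun e he => hRQ (R.edges_bypass_subset_edges he)

namespace Walk

lemma IsPath.edges_subset_of_length_add_length_lt_egirth [DecidableEq V] {a b x y : V}
    {W : G.Walk a b} (hW : W.IsPath) (Q : G.Walk x y) (ha : a ∈ Q.support) (hb : b ∈ Q.support)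
    (hlen : (W.length + Q.length : ℕ∞) < G.egirth) : W.edges ⊆ Q.edges := by
  let L := W.edges ++ Q.edges
  let H := fromEdgeSet {e | e ∈ L}
  have hLG : ∀ e ∈ L, e ∈ G.edgeSet := by
    simp only [L, List.mem_append]
    rintro e (he | he)
    exacts [W.edges_subset_edgeSet he, Q.edges_subset_edgeSet he]
  have hLH : ∀ e ∈ L, e ∈ H.edgeSet := fun e he => by
    rw [edgeSet_fromEdgeSet]
    exact ⟨he, G.not_isDiag_of_mem_edgeSet (hLG e he)⟩
  have hH : H.IsAcyclic := isAcyclic_fromEdgeSet_of_length_lt_egirth hLG (by simpa [L] using hlen)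
  simpa using hH.edges_subset_of_mem_support
    (hW.transfer fun e he => hLH e (List.mem_append_left _ he))
    (Q.transfer H fun e he => hLH e (List.mem_append_right _ he))
    (by simpa using ha) (by simpa using hb)

lemma IsPath.exists_isPath_edges_eq_of_isInfix {u v : V} {P : G.Walk u v} (hP : P.IsPath)
    {m : List (Sym2 V)} (hm : m <:+: P.edges) :
    ∃ (a b : V) (W : G.Walk a b), W.IsPath ∧ W.edges = m := by
  obtain ⟨s, t, hst⟩ := hm
  refine ⟨_, _, (P.drop s.length).take m.length, (hP.drop _).take _, ?_⟩
  simp [edges_take, edges_drop, ← hst]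

end Walk

end SimpleGraph

theorem path_intersection_contiguous_general {V : Type*} [DecidableEq V] (G : SimpleGraph V)
    {u v x y : V} (P : G.Walk u v) (hP : P.IsPath) (Q : G.Walk x y)
    (hlen : (P.length + Q.length : ℕ∞) < G.girth) :
    ∃ i j : ℕ, P.edges.filter (fun e => e ∈ Q.edges) = (P.edges.drop i).take j := by
  suffices hinf : P.edges.filter (fun e => e ∈ Q.edges) <:+: P.edges from
    hinf.exists_eq_take_drop
  refine List.filter_isInfix_of_forall_infix fun e f m hinf he hf => ?_
  simp only [decide_eq_true_eq] at he hf ⊢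
  obtain ⟨a, b, W, hW, hWe⟩ := hP.exists_isPath_edges_eq_of_isInfix hinf
  have hWnil : W.edges ≠ [] := by simp [hWe]
  have hhead : s(a, W.snd) = e := by
    rw [← W.head_edges_eq_mk_start_snd hWnil]
    simp [hWe]
  have hlast : s(W.penultimate, b) = f := by
    rw [← W.getLast_edges_eq_mk_penultimate_end hWnil]
    simp [hWe]
  have ha : a ∈ Q.support := Q.fst_mem_support_of_mem_edges (hhead ▸ he)
  have hb : b ∈ Q.support := Q.snd_mem_support_of_mem_edges (hlast ▸ hf)
  have hWlen : W.length ≤ P.length := by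
    simpa [← Walk.length_edges, hWe] using hinf.length_le
  have hWQ := hW.edges_subset_of_length_add_length_lt_egirth Q ha hb <| calc
    (W.length + Q.length : ℕ∞) ≤ P.length + Q.length := by gcongr
    _ < G.girth := hlen
    _ ≤ G.egirth := G.egirth.natCast_toNat_le_self
  exact fun d hd => hWQ (by simp [hWe, hd])

/-- if `P` and `Q` are simple paths of an unweighted graph `G` with
`|E(P)| + |E(Q)| < girth(G)`, then the edges of `P` that also lie on `Q` form a contiguous
subpath (an infix) of `P`. -/
theorem path_intersection_contiguous {V : Type*} [DecidableEq V] (G : SimpleGraph V)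
    {u v x y : V} (P : G.Walk u v) (hP : P.IsPath) (Q : G.Walk x y) (hQ : Q.IsPath)
    (hlen : (P.length + Q.length : ℕ∞) < G.girth) :
    ∃ i j : ℕ, P.edges.filter (fun e => e ∈ Q.edges) = (P.edges.drop i).take j :=
  path_intersection_contiguous_general G P hP Q hlen
end

section
/- Let P be a simple path partitioned into consecutive subpaths P_1, ..., P_m, and let Q be a family of simple paths each of which intersects P in a contiguous subpath. Define cov(X) as the minimum number of paths from Q needed to cover X (X contained in their union). Then cov(P) ≥ Σ_{j=1}^{m} (cov(P_j) - 1). -/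
open SimpleGraph

variable {V : Type*}

/-- A family of edge lists `𝒬` covers an edge list `X` if every edge of `X` lies on some
member of `𝒬`. -/
def Covers [DecidableEq V] (𝒬 : Finset (List (Sym2 V))) (X : List (Sym2 V)) : Prop :=
  ∀ e ∈ X, ∃ q ∈ 𝒬, e ∈ q

/-- `cov 𝒬 X` is the minimum size of a subfamily of `𝒬` covering `X`. -/
noncomputable def cov [DecidableEq V] (𝒬 : Finset (List (Sym2 V))) (X : List (Sym2 V)) : ℕ :=
  sInf {n | ∃ 𝒬' ⊆ 𝒬, 𝒬'.card = n ∧ Covers 𝒬' X}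

/-! Charge every path of a minimum cover of `A ++ B` to `B` if it meets `B` and to `A`
otherwise. The paths meeting `B` cover `B`; since each path meets `A ++ B` contiguously, those
among them that also meet `A` cover suffixes of `A`, so the one starting earliest in `A` covers
all that they cover there. Hence `cov (A ++ B) ≥ (cov A - 1) + cov B`, and the theorem follows
by induction on the number of blocks. -/

def IsContiguousIn {α : Type*} (p : α → Prop) (L : List α) : Prop :=
  ∃ a b : ℕ, ∀ k (hk : k < L.length), p L[k] ↔ a ≤ k ∧ k < b

section Contiguity

variable {α : Type*} {p : α → Prop}

theorem List.Nodup.isContiguousIn_of_filter_eq [DecidablePred p] {L : List α} (hL : L.Nodup)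
    {i j : ℕ} (h : L.filter (fun x => decide (p x)) = (L.drop i).take j) :
    IsContiguousIn p L := by
  refine ⟨i, i + j, fun k hk => ?_⟩
  have hmem : p L[k] ↔ L[k] ∈ (L.drop i).take j := by
    rw [← h]; simp [List.getElem_mem]
  rw [hmem, List.mem_iff_getElem]
  constructor
  · rintro ⟨t, ht, heq⟩
    rw [List.getElem_take, List.getElem_drop, hL.getElem_inj_iff] at heq
    simp only [List.length_take, List.length_drop] at ht
    omega
  · rintro ⟨hik, hkj⟩
    refine ⟨k - i, by simp only [List.length_take, List.length_drop]; omega, ?_⟩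
    rw [List.getElem_take, List.getElem_drop]
    congr 1
    omega

theorem IsContiguousIn.of_append_right {A B : List α} (h : IsContiguousIn p (A ++ B)) :
    IsContiguousIn p B := by
  obtain ⟨a, b, hab⟩ := h
  refine ⟨a - A.length, b - A.length, fun k hk => ?_⟩
  have hBk : (A ++ B)[A.length + k]'(by simp only [List.length_append]; omega) = B[k] := by simp
  rw [← hBk, hab]
  omega

end Contiguity

section Cover

variable [DecidableEq V] {𝒬 : Finset (List (Sym2 V))}

theorem cov_le_card {S : Finset (List (Sym2 V))} {X : List (Sym2 V)} (hS : S ⊆ 𝒬)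
    (h : Covers S X) : cov 𝒬 X ≤ S.card :=
  Nat.sInf_le ⟨S, hS, rfl, h⟩

theorem exists_covers_card_eq_cov {X : List (Sym2 V)} (h : Covers 𝒬 X) :
    ∃ S ⊆ 𝒬, S.card = cov 𝒬 X ∧ Covers S X :=
  Nat.sInf_mem (s := {n | ∃ 𝒬' ⊆ 𝒬, 𝒬'.card = n ∧ Covers 𝒬' X})
    ⟨_, 𝒬, subset_refl _, rfl, h⟩

theorem cov_le_card_filter_not_meets_add_one {S : Finset (List (Sym2 V))} {A B : List (Sym2 V)}
    (hS𝒬 : S ⊆ 𝒬) (hS : Covers S (A ++ B))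
    (hcontig : ∀ q ∈ S, IsContiguousIn (· ∈ q) (A ++ B)) :
    cov 𝒬 A ≤ (S.filter fun q => ¬∃ e ∈ B, e ∈ q).card + 1 := by
  choose! a b hab using hcontig
  set Y := S.filter fun q => ∃ e ∈ B, e ∈ q
  have hY : ∀ q ∈ Y, A.length < b q := by
    intro q hq
    obtain ⟨hqS, e, he, heq⟩ := Finset.mem_filter.1 hq
    obtain ⟨t, ht, rfl⟩ := List.mem_iff_getElem.1 he
    have hBt : (A ++ B)[A.length + t]'(by simp only [List.length_append]; omega) = B[t] := by
      simp
    have := ((hab q hqS _ _).1 (hBt ▸ heq)).2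
    omega
  have hcovA : ∀ q₀ ∈ Y, (∀ q ∈ Y, a q₀ ≤ a q) →
      Covers (insert q₀ (S.filter fun q => ¬∃ e ∈ B, e ∈ q)) A := by
    intro q₀ hq₀ hmin e he
    obtain ⟨q, hqS, hq⟩ := hS e (List.mem_append_left B he)
    by_cases hqB : ∃ e ∈ B, e ∈ q
    · refine ⟨q₀, Finset.mem_insert_self _ _, ?_⟩
      obtain ⟨k, hk, rfl⟩ := List.mem_iff_getElem.1 he
      have hAk : (A ++ B)[k]'(by simp only [List.length_append]; omega) = A[k] :=
        List.getElem_append_left hk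
      rw [← hAk] at hq ⊢
      have hq_start := ((hab q hqS _ _).1 hq).1
      have hq₀_start := hmin q (Finset.mem_filter.2 ⟨hqS, hqB⟩)
      have hq₀_end := hY q₀ hq₀
      exact (hab q₀ (Finset.mem_of_mem_filter _ hq₀) _ _).2 ⟨by omega, by omega⟩
    · exact ⟨q, Finset.mem_insert_of_mem (Finset.mem_filter.2 ⟨hqS, hqB⟩), hq⟩
  have hsub : S.filter (fun q => ¬∃ e ∈ B, e ∈ q) ⊆ 𝒬 :=
    (Finset.filter_subset _ _).trans hS𝒬
  by_cases hYne : Y.Nonempty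
  · obtain ⟨q₀, hq₀, hmin⟩ := Y.exists_min_image a hYne
    refine (cov_le_card ?_ (hcovA q₀ hq₀ hmin)).trans (Finset.card_insert_le _ _)
    exact Finset.insert_subset (hS𝒬 (Finset.mem_of_mem_filter _ hq₀)) hsub
  · refine (cov_le_card hsub fun e he => ?_).trans (Nat.le_succ _)
    obtain ⟨q, hqS, hq⟩ := hS e (List.mem_append_left B he)
    refine ⟨q, Finset.mem_filter.2 ⟨hqS, fun hqB => hYne ⟨q, ?_⟩⟩, hq⟩
    exact Finset.mem_filter.2 ⟨hqS, hqB⟩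

theorem cov_sub_one_add_cov_le_cov_append {A B : List (Sym2 V)}
    (hcontig : ∀ q ∈ 𝒬, IsContiguousIn (· ∈ q) (A ++ B)) (hcov : Covers 𝒬 (A ++ B)) :
    cov 𝒬 A - 1 + cov 𝒬 B ≤ cov 𝒬 (A ++ B) := by
  obtain ⟨S, hS𝒬, hScard, hS⟩ := exists_covers_card_eq_cov hcov
  have hA := cov_le_card_filter_not_meets_add_one hS𝒬 hS fun q hq => hcontig q (hS𝒬 hq)
  have hB : cov 𝒬 B ≤ (S.filter fun q => ∃ e ∈ B, e ∈ q).card := by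
    refine cov_le_card ((Finset.filter_subset _ _).trans hS𝒬) fun e he => ?_
    obtain ⟨q, hq, heq⟩ := hS e (List.mem_append_right A he)
    exact ⟨q, Finset.mem_filter.2 ⟨hq, e, he, heq⟩, heq⟩
  have := S.card_filter_add_card_filter_not fun q => ∃ e ∈ B, e ∈ q
  omega

theorem sum_cov_sub_one_le_cov_flatten : ∀ {Bs : List (List (Sym2 V))},
    (∀ q ∈ 𝒬, IsContiguousIn (· ∈ q) Bs.flatten) → Covers 𝒬 Bs.flatten →
    (Bs.map fun B => cov 𝒬 B - 1).sum ≤ cov 𝒬 Bs.flatten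
  | [], _, _ => by simp
  | B :: Bs, hcontig, hcov => by
    rw [List.flatten_cons] at hcontig hcov ⊢
    have ih := sum_cov_sub_one_le_cov_flatten (fun q hq => (hcontig q hq).of_append_right)
      fun e he => hcov e (List.mem_append_right B he)
    have := cov_sub_one_add_cov_le_cov_append hcontig hcov
    rw [List.map_cons, List.sum_cons]
    omega

end Cover

theorem cov_super_additive_general [DecidableEq V] (G : SimpleGraph V)
    {u v : V} (P : G.Walk u v) (hP : P.IsPath)
    (𝒬 : Finset (List (Sym2 V)))
    (hcontig : ∀ q ∈ 𝒬, ∃ i j : ℕ,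
        P.edges.filter (fun e => e ∈ q) = (P.edges.drop i).take j)
    {m : ℕ} (Ps : Fin m → List (Sym2 V))
    (hpart : (List.ofFn Ps).flatten = P.edges)
    (hcov : Covers 𝒬 P.edges) :
    ∑ j : Fin m, (cov 𝒬 (Ps j) - 1) ≤ cov 𝒬 P.edges := by
  have hPcontig : ∀ q ∈ 𝒬, IsContiguousIn (· ∈ q) (List.ofFn Ps).flatten := fun q hq => by
    obtain ⟨i, j, h⟩ := hcontig q hq
    rw [hpart]
    exact hP.isTrail.edges_nodup.isContiguousIn_of_filter_eq h
  rw [← hpart] at hcov ⊢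
  simpa [List.map_ofFn, List.sum_ofFn] using sum_cov_sub_one_le_cov_flatten hPcontig hcov

/-- let `P` be a simple path split into consecutive edge-disjoint subpaths
`P₁, …, P_m` (given by their edge lists, whose concatenation is the edge list of `P`),
and let `𝒬` be a finite family of (edge lists of) simple paths, each of which intersects `P`
in a contiguous subpath of `P`.  If `𝒬` covers `P`, then
`cov(P) ≥ Σⱼ (cov(Pⱼ) - 1)`. -/
theorem cov_super_additive [DecidableEq V] (G : SimpleGraph V)
    {u v : V} (P : G.Walk u v) (hP : P.IsPath)
    (𝒬 : Finset (List (Sym2 V)))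
    (hpaths : ∀ q ∈ 𝒬, ∃ (a b : V) (L : G.Walk a b), L.IsPath ∧ L.edges = q)
    (hcontig : ∀ q ∈ 𝒬, ∃ i j : ℕ,
        P.edges.filter (fun e => e ∈ q) = (P.edges.drop i).take j)
    {m : ℕ} (Ps : Fin m → List (Sym2 V))
    (hpart : (List.ofFn Ps).flatten = P.edges)
    (hcov : Covers 𝒬 P.edges) :
    ∑ j : Fin m, (cov 𝒬 (Ps j) - 1) ≤ cov 𝒬 P.edges :=
  cov_super_additive_general G P hP 𝒬 hcontig Ps hpart hcov
end

section
/- Let G be an unweighted graph. If P is a shortest u-v path in G with M edges and R is any u-v walk not containing all edges of P, then R has at least girth(G) − M edges. -/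
open SimpleGraph

private lemma walk_split_at_edge {V : Type*} {G : SimpleGraph V} :
    ∀ {a b : V} (W : G.Walk a b) (e : Sym2 V), e ∈ W.edges →
      ∃ (x y : V) (_ : G.Adj x y) (W₁ : G.Walk a x) (W₂ : G.Walk y b),
        e = s(x, y) ∧ W₁.length + W₂.length + 1 = W.length ∧
        W.edges = W₁.edges ++ e :: W₂.edges := by
  intro a b W
  induction W with
  | nil => intro e he; simp at he
  | cons h p ih =>
    intro e he
    rw [SimpleGraph.Walk.edges_cons, List.mem_cons] at he
    rcases he with he | he
    · exact ⟨_, _, h, SimpleGraph.Walk.nil, p, he, by simp, by simp [he]⟩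
    · obtain ⟨x, y, hxy, W₁, W₂, heq, hlen, hedges⟩ := ih e he
      exact ⟨x, y, hxy, SimpleGraph.Walk.cons h W₁, W₂, heq, by simp [← hlen]; ring,
        by simp [hedges]⟩

/-- let `P` be a shortest `u`-`v` path with `M` edges in an unweighted graph
`G`, and let `R` be any `u`-`v` walk that does not contain all edges of `P`.  Then `R` has at
least `girth(G) - M` edges (counted with multiplicity), i.e. `girth(G) ≤ |R| + M`. -/
theorem walk_missing_edge_long {V : Type*} [DecidableEq V] (G : SimpleGraph V)
    {u v : V} (P : G.Walk u v) (hP : P.IsPath) {M : ℕ} (hM : P.length = M)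
    (hshort : P.length = G.dist u v)
    (R : G.Walk u v) (hmiss : ∃ e ∈ P.edges, e ∉ R.edges) :
    G.girth ≤ (R.length + M : ℕ∞) := by
  obtain ⟨e, heP, heR⟩ := hmiss
  -- the closed walk P ++ R.reverse
  set C : G.Walk u u := P.append R.reverse with hC
  have heC : e ∈ C.edges := by
    rw [hC, SimpleGraph.Walk.edges_append, List.mem_append]; exact Or.inl heP
  obtain ⟨x, y, hxy, W₁, W₂, heq, hlen, hedges⟩ := walk_split_at_edge C e heC
  -- e appears exactly once in C, so not in W₁ nor W₂
  have hcount : C.edges.count e = 1 := by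
    rw [hC, SimpleGraph.Walk.edges_append, List.count_append]
    have h1 : P.edges.count e = 1 := List.count_eq_one_of_mem hP.isTrail.edges_nodup heP
    have h2 : (R.reverse).edges.count e = 0 := by
      rw [List.count_eq_zero]
      rw [SimpleGraph.Walk.edges_reverse, List.mem_reverse]
      exact heR
    omega
  have hnot : e ∉ W₁.edges ∧ e ∉ W₂.edges := by
    rw [hedges, List.count_append, List.count_cons_self] at hcount
    constructor <;> rw [← List.count_eq_zero] <;> omega
  -- walk from y to x avoiding e
  let W : G.Walk y x := W₂.append W₁
  have hWe : e ∉ W.edges := by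
    rw [SimpleGraph.Walk.edges_append]
    simp only [List.mem_append, not_or]
    exact ⟨hnot.2, hnot.1⟩
  have hbe : e ∉ W.bypass.edges := fun h => hWe (SimpleGraph.Walk.edges_bypass_subset W h)
  have hcyc : (SimpleGraph.Walk.cons hxy W.bypass).IsCycle := by
    rw [SimpleGraph.Walk.cons_isCycle_iff]
    exact ⟨SimpleGraph.Walk.bypass_isPath W, by rwa [← heq]⟩
  have hgir : G.egirth ≤ ((SimpleGraph.Walk.cons hxy W.bypass).length : ℕ∞) := by
    rw [SimpleGraph.egirth]
    exact iInf_le_of_le x (iInf_le_of_le _ (iInf_le _ hcyc))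
  have hlenW : (SimpleGraph.Walk.cons hxy W.bypass).length ≤ R.length + M := by
    have hb := SimpleGraph.Walk.length_bypass_le W
    have hWlen : W.length = W₂.length + W₁.length := SimpleGraph.Walk.length_append _ _
    have hClen : C.length = P.length + R.length := by
      rw [hC, SimpleGraph.Walk.length_append, SimpleGraph.Walk.length_reverse]
    simp only [SimpleGraph.Walk.length_cons]
    omega
  have hne : G.egirth ≠ ⊤ := by
    intro h
    rw [SimpleGraph.egirth_eq_top] at h
    exact h _ hcyc
  calc (G.girth : ℕ∞) = G.egirth := ENat.coe_toNat hne
    _ ≤ ((SimpleGraph.Walk.cons hxy W.bypass).length : ℕ∞) := hgir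
    _ ≤ (R.length + M : ℕ∞) := by exact_mod_cast Nat.cast_le.mpr hlenW
end
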